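/- arXiv:2602.18921 — 2 statements merged into one kernel-verified Lean document; each statement's English description precedes it below -/
import Mathlib

section
/- If a dependent family B over an assembly A is pointwise modest, then the assembly of tracked dependent functions Π(A,B) is modest. -/
/-- Kleene application: `kapp e n` is `φ_e(n)` in the first Kleene algebra. -/
def kapp (e n : ℕ) : Part ℕ :=
  Nat.Partrec.Code.eval (Denumerable.ofNat Nat.Partrec.Code e) n

/-- An assembly over the first Kleene algebra. -/
structure Assembly where
  carrier : Type u
  real : ℕ → carrier → Prop
  total : ∀ x, ∃ n, real n x

/-- `e` tracks `f : X → Y`. -/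
def Tracks (X : Assembly.{u}) (Y : Assembly.{v}) (e : ℕ) (f : X.carrier → Y.carrier) : Prop :=
  ∀ n x, X.real n x → ∃ m, m ∈ kapp e n ∧ Y.real m (f x)

/-- A morphism of assemblies is a function tracked by some code. -/
def IsAsmHom (X : Assembly.{u}) (Y : Assembly.{v}) (f : X.carrier → Y.carrier) : Prop :=
  ∃ e, Tracks X Y e f

/-- A modest set: every realiser codes at most one element. -/
def Modest (X : Assembly.{u}) : Prop :=
  ∀ n x₁ x₂, X.real n x₁ → X.real n x₂ → x₁ = x₂

theorem exists_id_code : ∃ e : ℕ, ∀ n : ℕ, n ∈ kapp e n := by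
  obtain ⟨c, hc⟩ := Nat.Partrec.Code.exists_code.mp
    (Partrec.nat_iff.mp (Computable.partrec (Computable.id (α := ℕ))))
  refine ⟨Encodable.encode c, fun n => ?_⟩
  simp [kapp, Denumerable.ofNat_encode, hc]

theorem exists_comp_code (e₁ e₂ : ℕ) :
    ∃ e : ℕ, ∀ n m₁ m₂ : ℕ, m₁ ∈ kapp e₁ n → m₂ ∈ kapp e₂ m₁ → m₂ ∈ kapp e n := by
  have h₁ : Partrec (kapp e₁) :=
    Partrec.nat_iff.mpr (Nat.Partrec.Code.exists_code.mpr ⟨_, rfl⟩)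
  have h₂ : Partrec (kapp e₂) :=
    Partrec.nat_iff.mpr (Nat.Partrec.Code.exists_code.mpr ⟨_, rfl⟩)
  have h : Partrec fun n => (kapp e₁ n).bind (kapp e₂) :=
    h₁.bind (h₂.comp Computable.snd)
  obtain ⟨c, hc⟩ := Nat.Partrec.Code.exists_code.mp (Partrec.nat_iff.mp h)
  refine ⟨Encodable.encode c, fun n m₁ m₂ hm₁ hm₂ => ?_⟩
  have : m₂ ∈ (kapp e₁ n).bind (kapp e₂) := Part.mem_bind_iff.mpr ⟨m₁, hm₁, hm₂⟩
  simpa [kapp, Denumerable.ofNat_encode, hc] using this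

/-- A code tracks a dependent function over an assembly family. -/
def PiTracks (A : Assembly.{u}) (B : A.carrier → Assembly.{v}) (e : ℕ)
    (f : ∀ a, (B a).carrier) : Prop :=
  ∀ n a, A.real n a → ∃ m, m ∈ kapp e n ∧ (B a).real m (f a)

/-- The assembly of tracked dependent functions Π(A,B). -/
def PiAsm (A : Assembly.{u}) (B : A.carrier → Assembly.{v}) : Assembly.{max u v} where
  carrier := {f : ∀ a, (B a).carrier // ∃ e, PiTracks A B e f}
  real e f := PiTracks A B e f.1
  total f := f.2

/-- If the family B is pointwise modest, then the assembly Π(A,B) of tracked dependent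
functions is modest. -/
theorem piAsm_modest (A : Assembly.{u}) (B : A.carrier → Assembly.{v})
    (hB : ∀ a, Modest (B a)) : Modest (PiAsm A B) := by
  rintro e ⟨f₁, hf₁⟩ ⟨f₂, hf₂⟩ h₁ h₂
  refine Subtype.ext (funext fun a => ?_)
  obtain ⟨n, hn⟩ := A.total a
  obtain ⟨m₁, hm₁, hr₁⟩ := h₁ n a hn
  obtain ⟨m₂, hm₂, hr₂⟩ := h₂ n a hn
  have : m₁ = m₂ := Part.mem_unique hm₁ hm₂
  exact hB a m₁ (f₁ a) (f₂ a) hr₁ (this ▸ hr₂)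
end

section
/- Every assembly morphism f : ∇ω₁ → X into a modest set X is constant. -/
/-- The assembly ∇X: the set X with the full realisability relation ℕ × X. -/
def nabla (X : Type u) : Assembly.{u} where
  carrier := X
  real _ _ := True
  total _ := ⟨0, trivial⟩

/-- ω₁ as a type: the countable ordinals, i.e. the ordinals below the first uncountable
ordinal. -/
abbrev Omega1 : Type 1 := {o : Ordinal.{0} // o < (Cardinal.aleph 1).ord}

/-- Every assembly morphism from ∇ω₁ (the countable ordinals with full realisability) into a
modest set is constant. -/
theorem hom_nabla_omega1_to_modest_constant (X : Assembly.{1}) (hX : Modest X)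
    (f : (nabla Omega1).carrier → X.carrier) (hf : IsAsmHom (nabla Omega1) X f) :
    ∃ c : X.carrier, ∀ α : (nabla Omega1).carrier, f α = c := by
  obtain ⟨e, he⟩ := hf
  have h0 : (0 : Ordinal.{0}) < (Cardinal.aleph 1).ord := by
    rw [Cardinal.lt_ord]; simpa using Cardinal.aleph_pos 1
  let α₀ : (nabla Omega1).carrier := ⟨0, h0⟩
  refine ⟨f α₀, fun α => ?_⟩
  obtain ⟨m, hm, hr⟩ := he 0 α trivial
  obtain ⟨m', hm', hr'⟩ := he 0 α₀ trivial
  have : m = m' := Part.mem_unique hm hm'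
  subst this
  exact hX m _ _ hr hr'
end
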